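/- Let (M, ⊣) be a monoid with identity e, and let M^{~1} = M ∪ {1̃} where 1̃ ∉ M, with operation extended by 1̃ ⊣ 1̃ = e and 1̃ ⊣ m = m ⊣ 1̃ = m for m ∈ M. If (M^{~1}, ⊢) is an interassociate of (M^{~1}, ⊣) with 1̃ ⊢ 1̃ = 1̃, then ⊢ restricted to M equals ⊣, and 1̃ ⊢ s = s ⊢ 1̃ = s for all s ∈ M^{~1} (i.e., (M^{~1}, ⊢) is M with 1̃ as an adjoined identity). -/

import Mathlib

theorem interassociate_of_almost_monoid_case_one {M : Type*} [Monoid M]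
    (h : Option M → Option M → Option M)
    (inter1 : ∀ x y z : Option M,
      h ((fun p q => match p, q with
            | some a, some b => some (a * b)
            | some a, none => some a
            | none, some b => some b
            | none, none => some 1) x y) z
        = (fun p q => match p, q with
            | some a, some b => some (a * b)
            | some a, none => some a
            | none, some b => some b
            | none, none => some 1) x (h y z))
    (inter2 : ∀ x y z : Option M,
      (fun p q => match p, q with
          | some a, some b => some (a * b)
          | some a, none => some a
          | none, some b => some b
          | none, none => some 1) (h x y) z
        = h x ((fun p q => match p, q with
            | some a, some b => some (a * b)
            | some a, none => some a
            | none, some b => some b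
            | none, none => some 1) y z))
    (h11 : h none none = none) :
    (∀ x y : M, h (some x) (some y) = some (x * y)) ∧
    (∀ s : Option M, h none s = s ∧ h s none = s) := by
  have none_left : ∀ b : M, h none (some b) = some b := fun b => by
    simpa only [h11] using (inter2 none none (some b)).symm
  have none_right : ∀ a : M, h (some a) none = some a := fun a => by
    simpa only [h11] using inter1 (some a) none none
  refine ⟨fun x y => ?_, ?_⟩
  · -- x ⊢ y = (x ⊣ 1̃) ⊢ y = x ⊣ (1̃ ⊢ y) = x ⊣ y
    simpa only [none_left] using inter1 (some x) none (some y)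
  · rintro (_ | s)
    · exact ⟨h11, h11⟩
    · exact ⟨none_left s, none_right s⟩
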